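/- arXiv:2503.03941 — 3 statements merged into one kernel-verified Lean document; each statement's English description precedes it below -/
import Mathlib

section
/- Suppose g is an invertible N×N complex matrix in canonical form whose flag lies in the Springer fiber S_X. For each k let g_k denote the k-th column of g and piv(g_k) the row index of its pivot. Then: (1) if piv(g_k) ≤ n, then g_k = e_{piv(g_k)} and each of the basis vectors e_1, …, e_{piv(g_k)−1} occurs among the first k−1 columns of g; (2) if piv(g_k) ≥ n+1, then for every row r with n+1 ≤ r ≤ piv(g_k)−1 some column among the first k−1 columns of g has its pivot in row r; (3) if piv(g_k) ≥ n+2 and k' is the index of the column of g whose pivot is in row piv(g_k)−1, then X·g_k − g_{k'} lies in span⟨e_1,…,e_n⟩ ∩ span⟨g_1,…,g_{k−1}⟩. -/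
attribute [local instance] Classical.propDecidable

noncomputable section

namespace TwoRowSpringer

/-- An arc is a pair `(init, term)` of natural numbers (with `init < term` in matchings). -/
abbrev Arc : Type := ℕ × ℕ

/-- A matching on `{1,…,N}`: a finite set of arcs with `init < term`, endpoints in `[1,N]`,
and all `2|M|` endpoints distinct. -/
def IsMatching (N : ℕ) (M : Finset Arc) : Prop :=
  (∀ a ∈ M, a.1 < a.2 ∧ 1 ≤ a.1 ∧ a.2 ≤ N) ∧
  (∀ a ∈ M, ∀ b ∈ M, a ≠ b →
    a.1 ≠ b.1 ∧ a.1 ≠ b.2 ∧ a.2 ≠ b.1 ∧ a.2 ≠ b.2)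

/-- `a` and `b` cross: `init b < init a < term b < term a`. -/
def Crosses (a b : Arc) : Prop := b.1 < a.1 ∧ a.1 < b.2 ∧ b.2 < a.2

def IsNoncrossing (M : Finset Arc) : Prop := ∀ a ∈ M, ∀ b ∈ M, ¬ Crosses a b

/-- Standard: every integer strictly under an arc is an endpoint of some arc. -/
def IsStandard (M : Finset Arc) : Prop :=
  ∀ a ∈ M, ∀ i : ℕ, a.1 < i → i < a.2 → ∃ b ∈ M, i = b.1 ∨ i = b.2

/-- `b` is nested above `a`. -/
def NestedAbove (b a : Arc) : Prop := b.1 < a.1 ∧ a.2 < b.2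

/-- `b` is the parent of `a` in `M`: nested immediately above `a`. -/
def IsParent (M : Finset Arc) (b a : Arc) : Prop :=
  b ∈ M ∧ NestedAbove b a ∧ ∀ c ∈ M, ¬ (b.1 < c.1 ∧ c.1 < a.1 ∧ a.2 < c.2)

/-- The ancestor function: the parent if it exists, otherwise `0 = (0,0)`;
note `anc M (0,0) = (0,0)`. -/
def anc (M : Finset Arc) (a : Arc) : Arc :=
  if h : ∃ b, IsParent M b a then h.choose else (0, 0)

/-- The ancestors of `a`: `a`, its parent, the parent of its parent, and so on. -/
def ancestors (M : Finset Arc) (a : Arc) : Set Arc :=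
  {b | b ≠ (0, 0) ∧ ∃ k : ℕ, (anc M)^[k] a = b}

def startsArc (M : Finset Arc) (i : ℕ) : Prop := ∃ a ∈ M, a.1 = i

def endsArc (M : Finset Arc) (i : ℕ) : Prop := ∃ a ∈ M, a.2 = i

def onArc (M : Finset Arc) (i : ℕ) : Prop := startsArc M i ∨ endsArc M i

/-- Number of `j` with `1 ≤ j ≤ i-1` starting an arc of `M`. -/
def Jbeg (M : Finset Arc) (i : ℕ) : ℕ :=
  ((Finset.Ico 1 i).filter fun j => startsArc M j).card

/-- Number of `j` with `1 ≤ j ≤ i-1` ending an arc of `M`. -/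
def Jend (M : Finset Arc) (i : ℕ) : ℕ :=
  ((Finset.Ico 1 i).filter fun j => endsArc M j).card

/-- Number of `j` with `1 ≤ j ≤ i-1` on no arc of `M`. -/
def Jnot (M : Finset Arc) (i : ℕ) : ℕ :=
  ((Finset.Ico 1 i).filter fun j => ¬ onArc M j).card

/-- The permutation `w_M` of `{1,…,N}` attached to a standard noncrossing matching `M`
(`n` is the size of the first Jordan block). -/
def wM (n : ℕ) (M : Finset Arc) (i : ℕ) : ℕ :=
  if startsArc M i then
    ((n : ℤ) + (Jbeg M i : ℤ) + min 0 ((Jnot M i : ℤ) - ((n - M.card : ℕ) : ℤ)) + 1).toNat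
  else if endsArc M i then
    Jend M i + max (Jnot M i) (n - M.card) + 1
  else if Jnot M i ≤ n - M.card then
    Jend M i + Jnot M i + 1
  else
    n + Jbeg M i + (Jnot M i - (n - M.card)) + 1

/-! ### Linear algebra -/

/-- The standard basis vector `e_i` of `ℂ^N` in 1-based indexing (zero if `i ∉ [1,N]`). -/
def eb (N : ℕ) (i : ℕ) : Fin N → ℂ := fun r => if (r : ℕ) + 1 = i then 1 else 0

/-- The nilpotent matrix of Jordan type `(n, N-n)`: `X e_i = e_{i-1}` for `i ∉ {1, n+1}`
(1-based) and `X e_1 = X e_{n+1} = 0`. -/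
def Xmat (N n : ℕ) : Matrix (Fin N) (Fin N) ℂ :=
  Matrix.of fun r c => if (c : ℕ) = (r : ℕ) + 1 ∧ (c : ℕ) ≠ n then 1 else 0

/-- Column `c` of `g` as a vector. -/
def col {N : ℕ} (g : Matrix (Fin N) (Fin N) ℂ) (c : Fin N) : Fin N → ℂ := fun r => g r c

/-- Span of the first `i` columns of `g` (1-based: columns `1,…,i`). -/
def spanCols {N : ℕ} (g : Matrix (Fin N) (Fin N) ℂ) (i : ℕ) : Submodule ℂ (Fin N → ℂ) :=
  Submodule.span ℂ {w | ∃ c : Fin N, (c : ℕ) < i ∧ w = col g c}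

/-- The flag of `g` lies in the Springer fiber of `Xmat N n`. -/
def SpringerCond (N n : ℕ) (g : Matrix (Fin N) (Fin N) ℂ) : Prop :=
  ∀ i : ℕ, ∀ v ∈ spanCols g i, (Xmat N n).mulVec v ∈ spanCols g i

/-- `g` is in canonical form with pivot of column `c` in row `σ c`: each pivot equals 1 and is
the lowest nonzero entry of its column, and entries to the right of a pivot vanish.  The pivots
form the permutation matrix of `σ`. -/
def CanonicalWithPerm {N : ℕ} (g : Matrix (Fin N) (Fin N) ℂ) (σ : Equiv.Perm (Fin N)) : Prop :=
  (∀ c, g (σ c) c = 1) ∧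
  (∀ c r, σ c < r → g r c = 0) ∧
  (∀ c c' : Fin N, c < c' → g (σ c) c' = 0)

/-- The permutation matrix of `σ`. -/
def permMat {N : ℕ} (σ : Equiv.Perm (Fin N)) : Matrix (Fin N) (Fin N) ℂ :=
  Matrix.of fun r c => if r = σ c then 1 else 0

/-- `r_0(α) = J_end(init α) + max{J_not(init α), n - k}`. -/
def r0 (n : ℕ) (M : Finset Arc) (a : Arc) : ℕ :=
  Jend M a.1 + max (Jnot M a.1) (n - M.card)

/-- Extend coordinates indexed by arcs of `M` by zero (this encodes `v₀ = 0`). -/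
def extv (M : Finset Arc) (v : Arc → ℂ) : Arc → ℂ := fun a => if a ∈ M then v a else 0

/-- `ι_{α,M}(v) = Σ_{j ≥ 1} v_{anc^{j-1} α} e_{r₀(α)+j}`. -/
def iota (N n : ℕ) (M : Finset Arc) (v : Arc → ℂ) (a : Arc) : Fin N → ℂ :=
  fun r => if r0 n M a ≤ (r : ℕ) then extv M v ((anc M)^[(r : ℕ) - r0 n M a] a) else 0

/-- The matrix `Im(v)`, whose column `init α` is `ι_{α,M}(v)` and whose other columns vanish. -/
def ImM (N n : ℕ) (M : Finset Arc) (v : Arc → ℂ) : Matrix (Fin N) (Fin N) ℂ :=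
  Matrix.of fun r c =>
    if h : ∃ a ∈ M, a.1 = (c : ℕ) + 1 then iota N n M v h.choose r else 0

/-- The permutation matrix of `w_M`. -/
def wMat (N n : ℕ) (M : Finset Arc) : Matrix (Fin N) (Fin N) ℂ :=
  Matrix.of fun r c => if (r : ℕ) + 1 = wM n M ((c : ℕ) + 1) then 1 else 0

/-- `f_M(v) = w_M + Im(v)`. -/
def fM (N n : ℕ) (M : Finset Arc) (v : Arc → ℂ) : Matrix (Fin N) (Fin N) ℂ :=
  wMat N n M + ImM N n M v

end TwoRowSpringer


/-!
In canonical form the lowest nonzero entry of a combination of columns lies in the highest pivot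
row among the columns that occur. Hence a vector of `V_i` vanishing from row `ρ` on is a
combination of columns of `V_i` with pivots above `ρ`, and a vector of `V_i` whose lowest nonzero
entry is in row `ρ` forces a column of `V_i` to pivot in row `ρ`. Applied to `X g_k ∈ V_k`, whose
lowest nonzero entry is a `1` in the row just above the pivot of `g_k` (unless that pivot starts a
Jordan block), this gives an earlier column pivoting there; by induction every row of the same
block above the pivot of `g_k` is the pivot row of an earlier column, and the canonical form then
kills the entries of `g_k` in those rows. This gives (1) and (2), and shows that `X g_k - g_{k'}`
vanishes on the second block, which gives (3).
-/

namespace TwoRowSpringer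

variable {N n : ℕ} {g : Matrix (Fin N) (Fin N) ℂ} {σ : Equiv.Perm (Fin N)}

lemma Xmat_mulVec_apply (u : Fin N → ℂ) (r : Fin N) :
    (Xmat N n).mulVec u r =
      if h : (r : ℕ) + 1 < N ∧ (r : ℕ) + 1 ≠ n then u ⟨(r : ℕ) + 1, h.1⟩ else 0 := by
  simp only [Xmat, Matrix.mulVec, dotProduct, Matrix.of_apply, ite_mul, one_mul, zero_mul]
  split_ifs with h
  · rw [Finset.sum_eq_single ⟨(r : ℕ) + 1, h.1⟩]
    · simp [h.2]
    · intro c _ hc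
      rw [if_neg fun hc' => hc (Fin.ext hc'.1)]
    · simp
  · refine Finset.sum_eq_zero fun c _ => if_neg ?_
    rintro ⟨hcr, hcn⟩
    exact h ⟨hcr ▸ c.isLt, hcr ▸ hcn⟩

lemma col_mem_spanCols {c : Fin N} {i : ℕ} (h : (c : ℕ) < i) : col g c ∈ spanCols g i :=
  Submodule.subset_span ⟨c, h, rfl⟩

lemma spanCols_eq_span_image (g : Matrix (Fin N) (Fin N) ℂ) (i : ℕ) :
    spanCols g i = Submodule.span ℂ (col g '' {c | (c : ℕ) < i}) := by
  unfold spanCols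
  congr 1
  ext w
  simp [eq_comm]

lemma mem_span_eb_of_apply_eq_zero {v : Fin N → ℂ} (hv : ∀ r : Fin N, n ≤ (r : ℕ) → v r = 0) :
    v ∈ Submodule.span ℂ {w : Fin N → ℂ | ∃ m : ℕ, 1 ≤ m ∧ m ≤ n ∧ w = eb N m} := by
  rw [pi_eq_sum_univ v]
  refine Submodule.sum_mem _ fun r _ => ?_
  by_cases hr : n ≤ (r : ℕ)
  · simp [hv r hr]
  · refine Submodule.smul_mem _ _ (Submodule.subset_span ⟨(r : ℕ) + 1, by omega, by omega, ?_⟩)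
    ext r'
    simp [eb, Fin.ext_iff, eq_comm]

lemma linearCombination_col_apply_pivot (hcan : CanonicalWithPerm g σ) (l : Fin N →₀ ℂ)
    {c₀ : Fin N} (hmax : ∀ c ∈ l.support, σ c ≤ σ c₀) :
    Finsupp.linearCombination ℂ (col g) l (σ c₀) = l c₀ := by
  rw [Finsupp.linearCombination_apply, Finsupp.sum, Finset.sum_apply, Finset.sum_eq_single c₀]
  · simp [col, hcan.1]
  · intro c hc hne
    have : σ c < σ c₀ := lt_of_le_of_ne (hmax c hc) (σ.injective.ne hne)
    simp [col, hcan.2.1 c _ this]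
  · intro h
    simp [Finsupp.notMem_support_iff.mp h]

lemma mem_span_col_of_apply_eq_zero (hcan : CanonicalWithPerm g σ) {i ρ : ℕ}
    {v : Fin N → ℂ} (hv : v ∈ spanCols g i) (hvan : ∀ r : Fin N, ρ ≤ (r : ℕ) → v r = 0) :
    v ∈ Submodule.span ℂ (col g '' {c | (c : ℕ) < i ∧ (σ c : ℕ) < ρ}) := by
  rw [spanCols_eq_span_image, Finsupp.mem_span_image_iff_linearCombination] at hv
  obtain ⟨l, hl, rfl⟩ := hv
  refine (Finsupp.mem_span_image_iff_linearCombination ℂ).mpr ⟨l, ?_, rfl⟩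
  rw [Finsupp.mem_supported] at hl ⊢
  rcases l.support.eq_empty_or_nonempty with hempty | hne
  · simp [hempty]
  obtain ⟨c₀, hc₀, hmax⟩ := l.support.exists_max_image σ hne
  have hc₀ρ : (σ c₀ : ℕ) < ρ := by
    by_contra h
    refine Finsupp.mem_support_iff.mp hc₀ ?_
    rw [← linearCombination_col_apply_pivot hcan l hmax]
    exact hvan _ (by omega)
  intro c hc
  exact ⟨hl hc, lt_of_le_of_lt (hmax c hc) hc₀ρ⟩

lemma exists_pivot_eq_of_mem_spanCols (hcan : CanonicalWithPerm g σ) {i : ℕ} {v : Fin N → ℂ}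
    (hv : v ∈ spanCols g i) {ρ : Fin N} (hρ : v ρ ≠ 0) (htop : ∀ r, ρ < r → v r = 0) :
    ∃ c : Fin N, (c : ℕ) < i ∧ σ c = ρ := by
  by_contra! hnone
  have hspan := mem_span_col_of_apply_eq_zero hcan hv (ρ := ρ + 1) fun r hr => htop r hr
  refine hρ (Submodule.span_le.mpr ?_ hspan : v ∈ LinearMap.ker (LinearMap.proj ρ))
  rintro _ ⟨c, ⟨hci, hcρ⟩, rfl⟩
  exact hcan.2.1 c ρ (lt_of_le_of_ne (Nat.lt_succ_iff.mp hcρ) (hnone c hci))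

lemma exists_pivot_pred_of_springer (hcan : CanonicalWithPerm g σ) (hspr : SpringerCond N n g)
    (k : Fin N) (hk₀ : 0 < (σ k : ℕ)) (hkn : (σ k : ℕ) ≠ n) :
    ∃ c : Fin N, (c : ℕ) < k ∧ (σ c : ℕ) = σ k - 1 := by
  have hX := hspr _ _ (col_mem_spanCols (g := g) (Nat.lt_succ_self k))
  obtain ⟨ρ, hρ⟩ : ∃ ρ : Fin N, (ρ : ℕ) = σ k - 1 := ⟨⟨σ k - 1, by omega⟩, rfl⟩
  have hXρ : (Xmat N n).mulVec (col g k) ρ = 1 := by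
    rw [Xmat_mulVec_apply, dif_pos ⟨by omega, by omega⟩, ← hcan.1 k]
    exact congrArg (g · k) (Fin.ext (by rw [Fin.val_mk]; omega))
  have hXtop : ∀ r, ρ < r → (Xmat N n).mulVec (col g k) r = 0 := by
    intro r hr
    rw [Xmat_mulVec_apply]
    split_ifs
    · exact hcan.2.1 k _ (show (σ k : ℕ) < r + 1 by rw [Fin.lt_def] at hr; omega)
    · rfl
  obtain ⟨c, hci, rfl⟩ := exists_pivot_eq_of_mem_spanCols hcan hX (by simp [hXρ]) hXtop
  have hck : c ≠ k := by
    rintro rfl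
    omega
  exact ⟨c, by omega, hρ⟩

/-- `hblock` says that row `r` lies in the same Jordan block as the pivot of column `k`. -/
lemma exists_earlier_pivot (hcan : CanonicalWithPerm g σ) (hspr : SpringerCond N n g)
    (k r : Fin N) (hr : (r : ℕ) < σ k) (hblock : (r : ℕ) < n ↔ (σ k : ℕ) < n) :
    ∃ c : Fin N, (c : ℕ) < k ∧ σ c = r := by
  induction k using WellFoundedLT.induction generalizing r with
  | _ k ih =>
    obtain ⟨c, hck, hc⟩ := exists_pivot_pred_of_springer hcan hspr k (by omega) (by omega)
    rcases (show (r : ℕ) ≤ σ c by omega).eq_or_lt with h | h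
    · exact ⟨c, hck, Fin.ext h.symm⟩
    · obtain ⟨c', hc'c, hc'⟩ := ih c hck r h (by omega)
      exact ⟨c', hc'c.trans hck, hc'⟩

lemma col_apply_eq_eb (hcan : CanonicalWithPerm g σ) {k : Fin N} {ρ : ℕ}
    (hpiv : ∀ r : Fin N, ρ ≤ (r : ℕ) → r < σ k → ∃ c : Fin N, (c : ℕ) < k ∧ σ c = r)
    (r : Fin N) (hr : ρ ≤ (r : ℕ)) : col g k r = eb N ((σ k : ℕ) + 1) r := by
  rcases lt_trichotomy r (σ k) with h | rfl | h
  · obtain ⟨c, hck, rfl⟩ := hpiv _ hr h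
    simp [col, eb, hcan.2.2 c k hck, Fin.val_ne_of_ne h.ne]
  · simp [col, eb, hcan.1]
  · simp [col, eb, hcan.2.1 k r h, Fin.val_ne_of_ne h.ne']

lemma col_eq_eb_of_pivot_lt (hcan : CanonicalWithPerm g σ) (hspr : SpringerCond N n g)
    {k : Fin N} (hk : (σ k : ℕ) < n) : col g k = eb N ((σ k : ℕ) + 1) :=
  funext fun r => col_apply_eq_eb hcan (ρ := 0)
    (fun r _ hr => exists_earlier_pivot hcan hspr k r hr (by omega)) r (Nat.zero_le _)

lemma col_apply_eq_eb_of_le_pivot (hcan : CanonicalWithPerm g σ) (hspr : SpringerCond N n g)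
    {k : Fin N} (hk : n ≤ (σ k : ℕ)) (r : Fin N) (hr : n ≤ (r : ℕ)) :
    col g k r = eb N ((σ k : ℕ) + 1) r :=
  col_apply_eq_eb hcan (fun r hnr hr => exists_earlier_pivot hcan hspr k r hr (by omega)) r hr

lemma Xmat_mulVec_col_sub_col_apply_eq_zero (hcan : CanonicalWithPerm g σ)
    (hspr : SpringerCond N n g) {k k' : Fin N} (hk : n + 1 ≤ (σ k : ℕ))
    (hk' : (σ k' : ℕ) = σ k - 1) (r : Fin N) (hr : n ≤ (r : ℕ)) :
    ((Xmat N n).mulVec (col g k) - col g k') r = 0 := by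
  rw [Pi.sub_apply, Xmat_mulVec_apply, col_apply_eq_eb_of_le_pivot hcan hspr (by omega) r hr]
  split_ifs with h
  · rw [col_apply_eq_eb_of_le_pivot hcan hspr (by omega) _ (by rw [Fin.val_mk]; omega)]
    simp only [eb]
    split_ifs <;> first | omega | norm_num
  · simp only [eb]
    split_ifs <;> first | omega | norm_num

lemma Xmat_mulVec_col_sub_col_mem (hcan : CanonicalWithPerm g σ) (hspr : SpringerCond N n g)
    {k k' : Fin N} (hk : n + 1 ≤ (σ k : ℕ)) (hk' : (σ k' : ℕ) = σ k - 1) :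
    (Xmat N n).mulVec (col g k) - col g k' ∈
      Submodule.span ℂ {w : Fin N → ℂ | ∃ m : ℕ, 1 ≤ m ∧ m ≤ n ∧ w = eb N m} ⊓
        spanCols g k := by
  have hvan := Xmat_mulVec_col_sub_col_apply_eq_zero hcan hspr hk hk'
  have hk'k : (k' : ℕ) < k := by
    obtain ⟨c, hck, hc⟩ := exists_earlier_pivot hcan hspr k (σ k') (by omega) (by omega)
    rwa [← σ.injective hc]
  have hmem : (Xmat N n).mulVec (col g k) - col g k' ∈ spanCols g (k + 1) :=
    sub_mem (hspr _ _ (col_mem_spanCols (Nat.lt_succ_self k))) (col_mem_spanCols (by omega))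
  refine ⟨mem_span_eb_of_apply_eq_zero hvan, ?_⟩
  refine Submodule.span_mono ?_ (mem_span_col_of_apply_eq_zero hcan hmem hvan)
  rintro _ ⟨c, ⟨hc, hcn⟩, rfl⟩
  have hck : c ≠ k := by
    rintro rfl
    omega
  exact ⟨c, by omega, rfl⟩

/-- Indices are 1-based in the informal statement; here `k : Fin N` is the (0-based) column
index, so column `k` is the `(k+1)`-st column and the pivot of column `k` is in (1-based) row
`(σ k) + 1`. -/
theorem columns_of_canonical_in_springer_general
    (N n : ℕ)
    (g : Matrix (Fin N) (Fin N) ℂ)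
    (σ : Equiv.Perm (Fin N)) (hcan : CanonicalWithPerm g σ)
    (hspr : SpringerCond N n g) (k : Fin N) :
    -- (1) pivot in the top block (1-based pivot row `(σ k)+1 ≤ n`)
    (((σ k : ℕ) < n) →
      col g k = eb N ((σ k : ℕ) + 1) ∧
      ∀ m : ℕ, 1 ≤ m → m ≤ (σ k : ℕ) →
        ∃ c : Fin N, (c : ℕ) < (k : ℕ) ∧ col g c = eb N m) ∧
    -- (2) pivot in the bottom block: all bottom-block rows above it are pivot rows of
    -- earlier columns
    ((n ≤ (σ k : ℕ)) →
      ∀ r : Fin N, n ≤ (r : ℕ) → (r : ℕ) < (σ k : ℕ) →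
        ∃ c : Fin N, (c : ℕ) < (k : ℕ) ∧ σ c = r) ∧
    -- (3) pivot 1-based row `≥ n+2`, i.e. `(σ k : ℕ) ≥ n+1`
    ((n + 1 ≤ (σ k : ℕ)) →
      ∀ k' : Fin N, (σ k' : ℕ) = (σ k : ℕ) - 1 →
        (Xmat N n).mulVec (col g k) - col g k' ∈
          (Submodule.span ℂ {w : Fin N → ℂ | ∃ m : ℕ, 1 ≤ m ∧ m ≤ n ∧ w = eb N m}) ⊓
            spanCols g (k : ℕ)) := by
  refine ⟨fun hk => ⟨col_eq_eb_of_pivot_lt hcan hspr hk, fun m hm₁ hm => ?_⟩,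
    fun hk r hnr hr => exists_earlier_pivot hcan hspr k r hr (by omega),
    fun hk k' hk' => Xmat_mulVec_col_sub_col_mem hcan hspr hk hk'⟩
  obtain ⟨c, hck, hc⟩ := exists_earlier_pivot hcan hspr k ⟨m - 1, by omega⟩
    (show m - 1 < (σ k : ℕ) by omega) (show m - 1 < n ↔ _ by omega)
  refine ⟨c, hck, ?_⟩
  rw [col_eq_eb_of_pivot_lt hcan hspr (by rw [hc]; show m - 1 < n; omega), hc, Fin.val_mk]
  congr 1
  omega

/-- Lemma 2.3.  Conditions on the columns of a canonical-form matrix whose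
flag lies in the two-block Springer fiber.  Indices are 1-based in the informal statement;
here `k : Fin N` is the (0-based) column index, so column `k` is the `(k+1)`-st column and the
pivot of column `k` is in (1-based) row `(σ k) + 1`. -/
theorem columns_of_canonical_in_springer
    (N n : ℕ) (hn : 1 ≤ n) (hnN : n ≤ N - 1)
    (g : Matrix (Fin N) (Fin N) ℂ) (hinv : IsUnit g)
    (σ : Equiv.Perm (Fin N)) (hcan : CanonicalWithPerm g σ)
    (hspr : SpringerCond N n g) (k : Fin N) :
    -- (1) pivot in the top block (1-based pivot row `(σ k)+1 ≤ n`)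
    (((σ k : ℕ) < n) →
      col g k = eb N ((σ k : ℕ) + 1) ∧
      ∀ m : ℕ, 1 ≤ m → m ≤ (σ k : ℕ) →
        ∃ c : Fin N, (c : ℕ) < (k : ℕ) ∧ col g c = eb N m) ∧
    -- (2) pivot in the bottom block: all bottom-block rows above it are pivot rows of
    -- earlier columns
    ((n ≤ (σ k : ℕ)) →
      ∀ r : Fin N, n ≤ (r : ℕ) → (r : ℕ) < (σ k : ℕ) →
        ∃ c : Fin N, (c : ℕ) < (k : ℕ) ∧ σ c = r) ∧
    -- (3) pivot 1-based row `≥ n+2`, i.e. `(σ k : ℕ) ≥ n+1`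
    ((n + 1 ≤ (σ k : ℕ)) →
      ∀ k' : Fin N, (σ k' : ℕ) = (σ k : ℕ) - 1 →
        (Xmat N n).mulVec (col g k) - col g k' ∈
          (Submodule.span ℂ {w : Fin N → ℂ | ∃ m : ℕ, 1 ≤ m ∧ m ≤ n ∧ w = eb N m}) ⊓
            spanCols g (k : ℕ)) :=
  columns_of_canonical_in_springer_general N n g σ hcan hspr k

end TwoRowSpringer
end
end

section
/- Let M be a standard noncrossing matching, let α_{i−1} and α_i be consecutive arcs of M in the order of their start points (init α_{i−1} < init α_i with no arc starting strictly in between), and set r = init α_i − init α_{i−1} − 2. If α_i has a parent, then anc^j(α_i) = anc^{j+r}(α_{i−1}) for all j ≥ 1. If anc^r(α_{i−1}) = 0, then α_i has no ancestors other than itself. -/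
attribute [local instance] Classical.propDecidable

noncomputable section

/-!
If `init b = init a + 1`, then `a` is the parent of `b` and `r = -1`. Otherwise let `p` be the
parent of `b`. Every point strictly between `init a` and `init b` lies under `p`, so by
standardness it is an endpoint, and by consecutiveness it is not a start: all of them are ends.
Hence `a` is the unit arc `(init a, init a + 1)`, and since in a noncrossing matching an arc
ending at `term c + 1` is the parent of `c`, the successive ancestors of `a` end at
`init a + 1, init a + 2, …`. The `r`-th one ends at `init b - 1`, right before `b`, and so has
the same parent `p` as `b`.
-/

namespace TwoRowSpringer

section Matching

variable {N : ℕ} {M : Finset Arc} {c d : Arc}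

theorem IsMatching.eq_of_fst_eq (hM : IsMatching N M) (hc : c ∈ M) (hd : d ∈ M)
    (h : c.1 = d.1) : c = d := by
  by_contra hne
  exact (hM.2 c hc d hd hne).1 h

theorem IsMatching.eq_of_snd_eq (hM : IsMatching N M) (hc : c ∈ M) (hd : d ∈ M)
    (h : c.2 = d.2) : c = d := by
  by_contra hne
  exact (hM.2 c hc d hd hne).2.2.2 h

theorem IsMatching.fst_ne_snd (hM : IsMatching N M) (hc : c ∈ M) (hd : d ∈ M) :
    c.1 ≠ d.2 := by
  by_cases hcd : c = d
  · subst hcd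
    exact (hM.1 c hc).1.ne
  · exact (hM.2 c hc d hd hcd).2.1

theorem IsMatching.ne_zero (hM : IsMatching N M) (hc : c ∈ M) : c ≠ (0, 0) := by
  rintro rfl
  exact absurd (hM.1 _ hc).2.1 (by simp)

theorem IsParent.ne_zero {p : Arc} (hp : IsParent M p c) : c ≠ (0, 0) := by
  rintro rfl
  exact Nat.not_lt_zero _ hp.2.1.1

theorem IsMatching.isParent_unique (hM : IsMatching N M) {p q : Arc}
    (hp : IsParent M p c) (hq : IsParent M q c) : p = q := by
  by_contra hne
  rcases lt_or_gt_of_ne (hM.2 p hp.1 q hq.1 hne).1 with h | h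
  · exact hp.2.2 q hq.1 ⟨h, hq.2.1.1, hq.2.1.2⟩
  · exact hq.2.2 p hp.1 ⟨h, hp.2.1.1, hp.2.1.2⟩

theorem IsMatching.anc_eq_of_isParent (hM : IsMatching N M) {p : Arc}
    (hp : IsParent M p c) : anc M c = p := by
  have h : ∃ q, IsParent M q c := ⟨p, hp⟩
  rw [anc, dif_pos h]
  exact hM.isParent_unique h.choose_spec hp

end Matching

section Noncrossing

variable {N : ℕ} {M : Finset Arc} {c d : Arc}

theorem snd_lt_snd_of_fst_mem_Ioo (hM : IsMatching N M) (hnc : IsNoncrossing M)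
    (hc : c ∈ M) (hd : d ∈ M) (h₁ : c.1 < d.1) (h₂ : d.1 < c.2) : d.2 < c.2 := by
  have hne : d.2 ≠ c.2 := fun h => by
    rw [hM.eq_of_snd_eq hd hc h] at h₁
    exact lt_irrefl _ h₁
  exact lt_of_le_of_ne (not_lt.1 fun h => hnc d hd c hc ⟨h₁, h₂, h⟩) hne

theorem isParent_of_fst_eq_fst_add_one (hM : IsMatching N M) (hnc : IsNoncrossing M)
    (hc : c ∈ M) (hd : d ∈ M) (h : d.1 = c.1 + 1) : IsParent M c d := by
  have hcc := (hM.1 c hc).1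
  have hdc : d.1 < c.2 := lt_of_le_of_ne (by omega) (hM.fst_ne_snd hd hc)
  refine ⟨hc, ⟨by omega, snd_lt_snd_of_fst_mem_Ioo hM hnc hc hd (by omega) hdc⟩, ?_⟩
  omega

theorem isParent_of_snd_eq_snd_add_one (hM : IsMatching N M) (hnc : IsNoncrossing M)
    (hc : c ∈ M) (hd : d ∈ M) (h : d.2 = c.2 + 1) : IsParent M d c := by
  have hcc := (hM.1 c hc).1
  have hdd := (hM.1 d hd).1
  have hdc : d.1 < c.1 := by
    rcases lt_trichotomy d.1 c.1 with hlt | heq | hgt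
    · exact hlt
    · rw [hM.eq_of_fst_eq hd hc heq] at h
      omega
    · have : d.1 < c.2 := lt_of_le_of_ne (by omega) (hM.fst_ne_snd hd hc)
      have := snd_lt_snd_of_fst_mem_Ioo hM hnc hc hd hgt this
      omega
  refine ⟨hd, ⟨hdc, by omega⟩, fun e he ⟨he₁, he₂, he₃⟩ => ?_⟩
  have := snd_lt_snd_of_fst_mem_Ioo hM hnc hd he he₁ (by omega)
  omega

theorem eq_of_snd_eq_fst_add_one (hM : IsMatching N M) (hnc : IsNoncrossing M)
    (hc : c ∈ M) (hd : d ∈ M) (h : d.2 = c.1 + 1) : d = c := by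
  have hcc := (hM.1 c hc).1
  have hdd := (hM.1 d hd).1
  refine hM.eq_of_fst_eq hd hc (le_antisymm (by omega) (not_lt.1 fun hlt => ?_))
  have := snd_lt_snd_of_fst_mem_Ioo hM hnc hd hc hlt (by omega)
  omega

theorem IsParent.of_snd_add_one_eq_fst (hM : IsMatching N M) (hnc : IsNoncrossing M)
    {b p : Arc} (hc : c ∈ M) (hb : b ∈ M) (hcb : c.2 + 1 = b.1) (hp : IsParent M p b) :
    IsParent M p c := by
  obtain ⟨hpM, ⟨hp₁, hp₂⟩, himm⟩ := hp
  have hbb := (hM.1 b hb).1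
  have hcc := (hM.1 c hc).1
  have hpc : p.1 < c.1 := by
    rcases lt_trichotomy p.1 c.1 with hlt | heq | hgt
    · exact hlt
    · rw [hM.eq_of_fst_eq hpM hc heq] at hp₂
      omega
    · have : p.1 < c.2 := lt_of_le_of_ne (by omega) (hM.fst_ne_snd hpM hc)
      have := snd_lt_snd_of_fst_mem_Ioo hM hnc hc hpM hgt this
      omega
  refine ⟨hpM, ⟨hpc, by omega⟩, fun e he ⟨he₁, he₂, he₃⟩ => ?_⟩
  -- `e` cannot end at `init b`, so it passes over `b`, contradicting minimality of `p`.
  have heb : b.1 < e.2 := lt_of_le_of_ne (by omega) (hM.fst_ne_snd hb he)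
  exact himm e he ⟨he₁, by omega, snd_lt_snd_of_fst_mem_Ioo hM hnc he hb (by omega) heb⟩

theorem iterate_anc_mem_and_snd_eq (hM : IsMatching N M) (hnc : IsNoncrossing M)
    (hc : c ∈ M) (k : ℕ) (hends : ∀ i, c.2 < i → i ≤ c.2 + k → endsArc M i) :
    (anc M)^[k] c ∈ M ∧ ((anc M)^[k] c).2 = c.2 + k := by
  induction k with
  | zero => exact ⟨hc, rfl⟩
  | succ k ih =>
    obtain ⟨hmem, hsnd⟩ := ih fun i h₁ h₂ => hends i h₁ (by omega)
    obtain ⟨e, he, he₂⟩ := hends (c.2 + k + 1) (by omega) le_rfl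
    have hpar := isParent_of_snd_eq_snd_add_one hM hnc hmem he (by omega)
    rw [Function.iterate_succ_apply', hM.anc_eq_of_isParent hpar]
    exact ⟨he, by omega⟩

end Noncrossing

section Consecutive

variable {N : ℕ} {M : Finset Arc} {a b p : Arc}

theorem endsArc_of_consecutive (hM : IsMatching N M) (hst : IsStandard M) (hb : b ∈ M)
    (hcons : ∀ c ∈ M, ¬ (a.1 < c.1 ∧ c.1 < b.1)) (hp : IsParent M p b)
    {i : ℕ} (h₁ : a.1 < i) (h₂ : i < b.1) : endsArc M i := by
  obtain ⟨hpM, ⟨hp₁, hp₂⟩, -⟩ := hp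
  have hbb := (hM.1 b hb).1
  have hpa : p.1 ≤ a.1 := not_lt.1 fun h => hcons p hpM ⟨h, hp₁⟩
  obtain ⟨e, he, hi | hi⟩ := hst p hpM i (by omega) (by omega)
  · exact absurd ⟨hi ▸ h₁, hi ▸ h₂⟩ (hcons e he)
  · exact ⟨e, he, hi.symm⟩

theorem isParent_iterate_anc_of_consecutive (hM : IsMatching N M) (hnc : IsNoncrossing M)
    (hst : IsStandard M) (ha : a ∈ M) (hb : b ∈ M)
    (hcons : ∀ c ∈ M, ¬ (a.1 < c.1 ∧ c.1 < b.1)) {k : ℕ} (hk : a.1 + k + 2 = b.1)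
    (hp : IsParent M p b) : IsParent M p ((anc M)^[k] a) := by
  have hends : ∀ i, a.1 < i → i < b.1 → endsArc M i := fun i h₁ h₂ =>
    endsArc_of_consecutive hM hst hb hcons hp h₁ h₂
  obtain ⟨e, he, he₂⟩ := hends (a.1 + 1) (by omega) (by omega)
  have ha₂ : a.2 = a.1 + 1 := eq_of_snd_eq_fst_add_one hM hnc ha he he₂ ▸ he₂
  obtain ⟨hmem, hsnd⟩ := iterate_anc_mem_and_snd_eq hM hnc ha k fun i h₁ h₂ =>
    hends i (by omega) (by omega)
  exact hp.of_snd_add_one_eq_fst hM hnc hmem hb (by omega)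

end Consecutive

/-- Lemma 3.8.  Shifting the ancestor function between consecutive arcs of a
standard noncrossing matching.  Here `a` and `b` are consecutive arcs (ordered by start
points) and `r = init b - init a - 2` (as an integer, since it can equal `-1`). -/
theorem shifting_ancestor_function
    (N : ℕ) (M : Finset Arc) (hM : IsMatching N M) (hnc : IsNoncrossing M)
    (hst : IsStandard M)
    (a b : Arc) (ha : a ∈ M) (hb : b ∈ M) (hab : a.1 < b.1)
    (hcons : ∀ c ∈ M, ¬ (a.1 < c.1 ∧ c.1 < b.1))
    (r : ℤ) (hr : r = (b.1 : ℤ) - (a.1 : ℤ) - 2) :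
    ((∃ p, IsParent M p b) →
      ∀ j : ℕ, 1 ≤ j → (anc M)^[j] b = (anc M)^[((j : ℤ) + r).toNat] a) ∧
    ((anc M)^[r.toNat] a = (0, 0) → ∀ p, ¬ IsParent M p b) := by
  obtain hadj | ⟨k, hk⟩ : b.1 = a.1 + 1 ∨ ∃ k, a.1 + k + 2 = b.1 := by
    rcases Nat.lt_or_ge (a.1 + 1) b.1 with h | h
    · exact .inr ⟨b.1 - a.1 - 2, by omega⟩
    · exact .inl (by omega)
  · have hanc : anc M b = a :=
      hM.anc_eq_of_isParent (isParent_of_fst_eq_fst_add_one hM hnc ha hb hadj)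
    obtain rfl : r = -1 := by omega
    refine ⟨fun _ j hj => ?_, fun h => absurd h (hM.ne_zero ha)⟩
    obtain ⟨m, rfl⟩ : ∃ m, j = m + 1 := ⟨j - 1, by omega⟩
    rw [Function.iterate_succ_apply, hanc, show ((m + 1 : ℕ) + (-1 : ℤ)).toNat = m by omega]
  · obtain rfl : r = k := by omega
    have hpar := fun p (hp : IsParent M p b) =>
      isParent_iterate_anc_of_consecutive hM hnc hst ha hb hcons hk hp
    refine ⟨fun ⟨p, hp⟩ j hj => ?_, fun h p hp => (hpar p hp).ne_zero (by simpa using h)⟩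
    obtain ⟨m, rfl⟩ : ∃ m, j = m + 1 := ⟨j - 1, by omega⟩
    rw [show ((m + 1 : ℕ) + (k : ℤ)).toNat = m + 1 + k by omega,
      Function.iterate_add_apply (anc M) (m + 1) k a, Function.iterate_succ_apply,
      Function.iterate_succ_apply _ m ((anc M)^[k] a), hM.anc_eq_of_isParent hp,
      hM.anc_eq_of_isParent (hpar p hp)]

end TwoRowSpringer
end
end

section
/- Let (g_m)_{m ∈ ℕ} be a sequence of invertible N×N complex matrices converging entrywise to an invertible matrix g'. Fix an index i with 1 ≤ i ≤ N and a set of standard basis vectors e_{i_1}, …, e_{i_j} of ℂ^N. If for every m each of e_{i_1}, …, e_{i_j} lies in the span of the first i columns of g_m, then each of e_{i_1}, …, e_{i_j} lies in the span of the first i columns of g'. -/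
attribute [local instance] Classical.propDecidable

noncomputable section

/-!
For invertible `g`, the vector `e_r` lies in the span of the first `i` columns of `g` iff the
entries `(g⁻¹) c r` vanish for `c ≥ i`. Near the invertible limit `g'` all `g m` are invertible
and `g ↦ g⁻¹` is continuous, so these vanishing conditions pass to the limit.
-/

open Filter Topology Matrix

lemma Pi.mem_span_basisFun_image_iff {R ι : Type*} [Semiring R] [Finite ι] (s : Set ι)
    (v : ι → R) : v ∈ Submodule.span R (Pi.basisFun R ι '' s) ↔ ∀ c ∉ s, v c = 0 := by
  rw [Module.Basis.mem_span_image]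
  simp only [Set.subset_def, Finset.mem_coe, Finsupp.mem_support_iff, Pi.basisFun_repr]
  exact forall_congr' fun c => not_imp_comm

section

variable {ι n 𝕜 : Type*} [Fintype n] [DecidableEq n] [Field 𝕜] [TopologicalSpace 𝕜]
  [IsTopologicalRing 𝕜] {l : Filter ι} {A : ι → Matrix n n 𝕜} {B : Matrix n n 𝕜}

lemma Filter.Tendsto.matrix_inv [ContinuousInv₀ 𝕜] (h : Tendsto A l (𝓝 B)) (hB : IsUnit B) :
    Tendsto (fun k => (A k)⁻¹) l (𝓝 B⁻¹) := by
  have hdet : B.det ≠ 0 := ((isUnit_iff_isUnit_det B).mp hB).ne_zero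
  refine (continuousAt_matrix_inv B ?_).tendsto.comp h
  rw [Ring.inverse_eq_inv']
  exact continuousAt_inv₀ hdet

lemma Filter.Tendsto.eventually_isUnit [T1Space 𝕜] (h : Tendsto A l (𝓝 B)) (hB : IsUnit B) :
    ∀ᶠ k in l, IsUnit (A k) := by
  have hdet : B.det ≠ 0 := ((isUnit_iff_isUnit_det B).mp hB).ne_zero
  filter_upwards [((continuous_id.matrix_det.tendsto B).comp h).eventually_ne hdet] with k hk
  exact (isUnit_iff_isUnit_det _).mpr (isUnit_iff_ne_zero.mpr hk)

end

namespace TwoRowSpringer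

lemma spanCols_eq_map {N : ℕ} (g : Matrix (Fin N) (Fin N) ℂ) (i : ℕ) :
    spanCols g i =
      (Submodule.span ℂ (Pi.basisFun ℂ (Fin N) '' {c | (c : ℕ) < i})).map (toLin' g) := by
  rw [Submodule.map_span, ← Set.image_comp]
  unfold spanCols
  congr 1
  ext w
  simp only [Set.mem_ofPred_eq, Set.mem_image, Function.comp_apply, Pi.basisFun_apply,
    toLin'_apply, mulVec_single_one]
  exact exists_congr fun c => and_congr_right fun _ => eq_comm

lemma mem_spanCols_iff {N : ℕ} {g : Matrix (Fin N) (Fin N) ℂ} (hg : IsUnit g) (i : ℕ)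
    (v : Fin N → ℂ) : v ∈ spanCols g i ↔ ∀ c : Fin N, i ≤ (c : ℕ) → (g⁻¹ *ᵥ v) c = 0 := by
  have hdet : IsUnit g.det := (isUnit_iff_isUnit_det g).mp hg
  simp only [spanCols_eq_map, Submodule.mem_map, toLin'_apply, Pi.mem_span_basisFun_image_iff,
    Set.mem_ofPred_eq, not_lt]
  constructor
  · rintro ⟨w, hw, rfl⟩
    rwa [mulVec_mulVec, nonsing_inv_mul g hdet, one_mulVec]
  · exact fun hv => ⟨g⁻¹ *ᵥ v, hv, by rw [mulVec_mulVec, mul_nonsing_inv g hdet, one_mulVec]⟩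

lemma eb_succ {N : ℕ} (r : Fin N) : eb N ((r : ℕ) + 1) = Pi.single r 1 := by
  ext s
  simp [eb, Pi.single_apply, Fin.val_inj]

lemma eb_succ_mem_spanCols_iff {N : ℕ} {g : Matrix (Fin N) (Fin N) ℂ} (hg : IsUnit g) (i : ℕ)
    (r : Fin N) : eb N ((r : ℕ) + 1) ∈ spanCols g i ↔ ∀ c : Fin N, i ≤ (c : ℕ) → g⁻¹ c r = 0 := by
  simp [eb_succ, mem_spanCols_iff hg]

theorem basis_vectors_in_limit_span_general
    (N : ℕ) (g : ℕ → Matrix (Fin N) (Fin N) ℂ) (g' : Matrix (Fin N) (Fin N) ℂ)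
    (hinv' : IsUnit g')
    (hconv : ∀ r c : Fin N,
      Filter.Tendsto (fun m : ℕ => g m r c) Filter.atTop (nhds (g' r c)))
    (i : ℕ)
    (S : Finset (Fin N))
    (hS : ∀ m : ℕ, ∀ r ∈ S, eb N ((r : ℕ) + 1) ∈ spanCols (g m) i) :
    ∀ r ∈ S, eb N ((r : ℕ) + 1) ∈ spanCols g' i := by
  have hlim : Tendsto g atTop (𝓝 g') := tendsto_pi_nhds.2 fun r => tendsto_pi_nhds.2 (hconv r)
  intro r hr
  rw [eb_succ_mem_spanCols_iff hinv']
  intro c hc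
  refine isClosed_singleton.mem_of_tendsto
    (((continuous_apply_apply c r).tendsto _).comp (hlim.matrix_inv hinv')) ?_
  filter_upwards [hlim.eventually_isUnit hinv'] with m hm
  exact (eb_succ_mem_spanCols_iff hm i r).1 (hS m r hr) c hc

/-- Lemma 5.2.  If a sequence of invertible matrices converges entrywise to
an invertible matrix and a fixed set of standard basis vectors lies in the span of the first
`i` columns of every matrix in the sequence, then those basis vectors lie in the span of the
first `i` columns of the limit. -/
theorem basis_vectors_in_limit_span
    (N : ℕ) (g : ℕ → Matrix (Fin N) (Fin N) ℂ) (g' : Matrix (Fin N) (Fin N) ℂ)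
    (hinv : ∀ m : ℕ, IsUnit (g m)) (hinv' : IsUnit g')
    (hconv : ∀ r c : Fin N,
      Filter.Tendsto (fun m : ℕ => g m r c) Filter.atTop (nhds (g' r c)))
    (i : ℕ) (hi1 : 1 ≤ i) (hiN : i ≤ N)
    (S : Finset (Fin N))
    (hS : ∀ m : ℕ, ∀ r ∈ S, eb N ((r : ℕ) + 1) ∈ spanCols (g m) i) :
    ∀ r ∈ S, eb N ((r : ℕ) + 1) ∈ spanCols g' i :=
  basis_vectors_in_limit_span_general N g g' hinv' hconv i S hS

end TwoRowSpringer
end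
end
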